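/- In every (m,n)_k-ring graph, the in-degree of every vertex equals its out-degree; combined with weak connectivity, the graph is Eulerian. -/

import Mathlib

open Finset

/-- Vertical cyclic rotation of a pattern (of height `m`) by `r` rows. -/
def vrot {m j k : ℕ} (r : Fin m) (P : Fin m → Fin j → Fin k) : Fin m → Fin j → Fin k :=
  fun i => P (i + r)

/-- A pattern viewed as a word of rows, in the lexicographic order. -/
def patLex {m j k : ℕ} (P : Fin m → Fin j → Fin k) : Lex (Fin m → Lex (Fin j → Fin k)) :=
  toLex (fun i => toLex (P i))

/-- A pattern is row-Lyndon if it is lexicographically strictly smaller than every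
nontrivial vertical rotation of itself. -/
def IsRowLyndon {m j k : ℕ} (P : Fin m → Fin j → Fin k) : Prop :=
  ∀ r : Fin m, (r : ℕ) ≠ 0 → patLex P < patLex (vrot r P)

/-- A pattern is the `lexmin` representative of its vertical rotation class. -/
def IsLexmin {m j k : ℕ} (P : Fin m → Fin j → Fin k) : Prop :=
  ∀ r : Fin m, patLex P ≤ patLex (vrot r P)

/-- Append the column `R` on the right of the pattern `P`. -/
def snocPat {m j k : ℕ} (P : Fin m → Fin j → Fin k) (R : Fin m → Fin k) :
    Fin m → Fin (j + 1) → Fin k :=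
  fun i => Fin.snoc (P i) (R i)

/-- Drop the leftmost column of the pattern `Q`. -/
def tailPat {m j k : ℕ} (Q : Fin m → Fin (j + 1) → Fin k) : Fin m → Fin j → Fin k :=
  fun i t => Q i t.succ

/-- The edge relation of the `(m, j+1)_k`-ring graph: there is an edge labeled `R` from the
vertex `P₁` to the vertex `P₂` iff `P₁` and `P₂` are lexmin representatives, the pattern
`[P₁, R]` of shape `(m, j+1)` is row-aperiodic (its lexmin rotation is row-Lyndon), `P₂` is
the lexmin of the last `j` columns of `[P₁, R]`, and `R` is the lexicographically smallest
column producing this rotation class from `P₁`. -/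
def RingEdge {m j k : ℕ} (P₁ P₂ : Fin m → Fin j → Fin k) (R : Fin m → Fin k) : Prop :=
  IsLexmin P₁ ∧ IsLexmin P₂ ∧
  (∃ r : Fin m, IsRowLyndon (vrot r (snocPat P₁ R))) ∧
  (∃ r : Fin m, vrot r (tailPat (snocPat P₁ R)) = P₂) ∧
  (∀ R' : Fin m → Fin k,
    (∃ r : Fin m, vrot r (snocPat P₁ R') = snocPat P₁ R) → toLex R ≤ toLex R')

/-!
An edge of the ring graph with source `P₁` and label `R` is the row-aperiodic pattern `[P₁, R]`,
normalised within its rotation class by minimising first its left block and then its last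
column; its target is the lexmin rotation of its right block. So the edges into `V` are the
classes whose right block is a rotation of `V`, the edges out of `V` those whose left block is,
and moving the first column to the end exchanges the two: in- and out-degrees agree.

Sliding a window across the columns of `V`, then one aperiodic column, then those of `W`, passes
only through aperiodic patterns, so all lexmin vertices are mutually reachable. In a balanced,
connected digraph a longest trail is closed (its end is entered more often than left otherwise)
and contains every edge leaving one of its vertices (rotate and extend), hence every edge.
-/

section Cycle

variable {α : Type*} {r : α → α → Prop}

theorem List.IsChain.of_cycleChain {l : List α} (h : Cycle.Chain r (l : Cycle α)) :
    l.IsChain r := by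
  rcases eq_or_ne l [] with rfl | hne
  · exact .nil
  · exact ((Cycle.chain_ne_nil r hne).1 h).tail

theorem List.rel_get_mod_of_cycleChain {l : List α} (h : Cycle.Chain r (l : Cycle α))
    (i : Fin l.length) :
    r (l.get i) (l.get ⟨((i : ℕ) + 1) % l.length,
      Nat.mod_lt _ (Nat.lt_of_le_of_lt (Nat.zero_le _) i.2)⟩) := by
  obtain ⟨a, t, rfl⟩ := List.exists_cons_of_ne_nil (List.ne_nil_of_length_pos i.pos)
  rw [Cycle.chain_coe_cons, ← List.cons_append] at h
  have hi := i.2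
  have := h.getElem i (by simp at hi ⊢; omega)
  rw [List.getElem_append_left hi] at this
  rcases lt_or_eq_of_le (Nat.lt_succ_iff.1 hi) with hi | hi
  · simpa [List.getElem_append_left, hi, Nat.mod_eq_of_lt] using this
  · simpa [List.getElem_append_left, hi] using this

end Cycle

section Euler

variable {V E : Type*}

def IsTrail (r : E → E → Prop) (l : List E) : Prop :=
  l.Nodup ∧ l.IsChain r

theorem exists_longest_isTrail [Finite E] (r : E → E → Prop) :
    ∃ l : List E, IsTrail r l ∧ ∀ l' : List E, IsTrail r l' → l'.length ≤ l.length := by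
  cases nonempty_fintype E
  have hfin : {l : List E | IsTrail r l}.Finite :=
    (List.finite_length_le E (Fintype.card E)).subset fun l hl => hl.1.length_le_card
  obtain ⟨l, hl, hmax⟩ := Set.exists_max_image _ List.length hfin ⟨[], List.nodup_nil, .nil⟩
  exact ⟨l, hl, hmax⟩

theorem mem_of_rel_getLast {r : E → E → Prop} {l : List E} (hl : IsTrail r l)
    (hmax : ∀ l' : List E, IsTrail r l' → l'.length ≤ l.length) (hne : l ≠ [])
    {f : E} (hf : r (l.getLast hne) f) : f ∈ l := by
  by_contra hfl
  have hext : IsTrail r (l ++ [f]) :=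
    ⟨List.concat_eq_append ▸ hl.1.concat hfl,
      hl.2.append (.singleton f) fun x hx y hy => by
        simp_all [List.getLast?_eq_some_getLast hne]⟩
  simpa using hmax _ hext

theorem perm_src_cons_map_tgt (src tgt : E → V) :
    ∀ (e : E) (l : List E), (e :: l).IsChain (fun a b => tgt a = src b) →
      (src e :: (e :: l).map tgt).Perm
        (tgt ((e :: l).getLast (List.cons_ne_nil e l)) :: (e :: l).map src)
  | e, [], _ => .swap _ _ _
  | e, f :: l, h => by
    obtain ⟨hef, h⟩ := List.isChain_cons_cons.1 h
    have ih := perm_src_cons_map_tgt src tgt f l h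
    simp only [List.map_cons, List.getLast_cons_cons] at ih ⊢
    rw [hef]
    exact (ih.cons _).trans (.swap _ _ _)

theorem List.Nodup.countP_le_natCard [Finite E] {l : List E} (hl : l.Nodup) (p : E → Prop)
    [DecidablePred p] : l.countP p ≤ Nat.card {e // p e} := by
  classical
  cases nonempty_fintype E
  rw [← hl.card_eq_countP, Nat.card_eq_fintype_card, Fintype.card_subtype]
  exact Finset.card_le_card (Finset.filter_subset_filter _ (Finset.subset_univ _))

theorem List.Nodup.countP_eq_natCard [Finite E] {l : List E} (hl : l.Nodup) (p : E → Prop)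
    [DecidablePred p] (h : ∀ e, p e → e ∈ l) : l.countP p = Nat.card {e // p e} := by
  classical
  cases nonempty_fintype E
  rw [← hl.card_eq_countP, Nat.card_eq_fintype_card, Fintype.card_subtype]
  congr 1
  ext e
  simpa using fun he => h e he

theorem tgt_getLast_eq_src_head [Finite E] {src tgt : E → V}
    (balanced : ∀ v, Nat.card {e // tgt e = v} = Nat.card {e // src e = v}) {l : List E}
    (hl : IsTrail (fun a b => tgt a = src b) l) (hne : l ≠ [])
    (hout : ∀ f, tgt (l.getLast hne) = src f → f ∈ l) :
    tgt (l.getLast hne) = src (l.head hne) := by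
  classical
  obtain ⟨e, l, rfl⟩ := List.exists_cons_of_ne_nil hne
  set v := tgt ((e :: l).getLast hne)
  by_contra hv
  -- along an open trail ending at `v`, `v` is entered once more than it is left
  have hcount := (perm_src_cons_map_tgt src tgt e l hl.2).countP_eq (· = v)
  rw [List.countP_cons_of_neg (by simpa using Ne.symm hv), List.countP_cons_of_pos (by simp [v]),
    List.countP_map, List.countP_map] at hcount
  have hin := hl.1.countP_le_natCard (fun f => tgt f = v)
  have hsrc := hl.1.countP_eq_natCard (fun f => src f = v) fun f hf => hout f hf.symm
  simp only [Function.comp_def] at hcount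
  have := balanced v
  omega

theorem mem_of_rel_of_cycleChain {r : E → E → Prop} {l : List E} (hl : IsTrail r l)
    (hmax : ∀ l' : List E, IsTrail r l' → l'.length ≤ l.length)
    (hcyc : Cycle.Chain r (l : Cycle E)) {e f : E} (he : e ∈ l) (hf : r e f) : f ∈ l := by
  obtain ⟨s, t, rfl⟩ := List.append_of_mem he
  -- rotate the circuit so that it ends with `e`; it stays a longest trail
  have hrot : (s ++ [e] ++ t) ~r (t ++ (s ++ [e])) := List.isRotated_append
  rw [List.append_cons] at hl hmax hcyc ⊢
  rw [Cycle.coe_eq_coe.2 hrot] at hcyc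
  refine hrot.perm.mem_iff.2 (mem_of_rel_getLast ⟨hrot.nodup_iff.1 hl.1,
    List.IsChain.of_cycleChain hcyc⟩ (fun l' hl' => hrot.perm.length_eq ▸ hmax l' hl')
    (by simp) ?_)
  simpa using hf

theorem exists_eulerian_circuit [Finite E] (src tgt : E → V)
    (balanced : ∀ v, Nat.card {e // tgt e = v} = Nat.card {e // src e = v})
    (connected : ∀ e e' : E, Relation.ReflTransGen (fun u v => ∃ f, src f = u ∧ tgt f = v)
      (tgt e) (src e')) :
    ∃ l : List E, l.Nodup ∧ (∀ e, e ∈ l) ∧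
      Cycle.Chain (fun e f => tgt e = src f) (l : Cycle E) := by
  obtain ⟨l, hl, hmax⟩ := exists_longest_isTrail (fun e f => tgt e = src f)
  rcases eq_or_ne l [] with rfl | hne
  · refine ⟨[], List.nodup_nil, fun e => ?_, Cycle.Chain.nil _⟩
    simpa using hmax [e] ⟨List.nodup_singleton e, .singleton e⟩
  have hcyc : Cycle.Chain (fun e f => tgt e = src f) (l : Cycle E) := by
    have hclosed := tgt_getLast_eq_src_head balanced hl hne
      fun f hf => mem_of_rel_getLast hl hmax hne hf
    rw [Cycle.chain_ne_nil _ hne]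
    obtain ⟨e, t, rfl⟩ := List.exists_cons_of_ne_nil hne
    exact List.isChain_cons_cons.2 ⟨hclosed, hl.2⟩
  have hreach : ∀ v, Relation.ReflTransGen (fun u v => ∃ f, src f = u ∧ tgt f = v)
      (tgt (l.getLast hne)) v → ∃ e ∈ l, tgt e = v := by
    intro v h
    induction h with
    | refl => exact ⟨_, List.getLast_mem hne, rfl⟩
    | tail _ hstep ih =>
      obtain ⟨e, he, rfl⟩ := ih
      obtain ⟨f, hf, rfl⟩ := hstep
      exact ⟨f, mem_of_rel_of_cycleChain hl hmax hcyc he hf.symm, rfl⟩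
  refine ⟨l, hl.1, fun f => ?_, hcyc⟩
  obtain ⟨e, he, hef⟩ := hreach _ (connected (l.getLast hne) f)
  exact mem_of_rel_of_cycleChain hl hmax hcyc he hef

end Euler

section LabelledDigraph

variable {V L : Type*} (Edge : V → V → L → Prop)

theorem natCard_edges_tgt_eq (v : V) :
    Nat.card {e : {x : V × V × L // Edge x.1 x.2.1 x.2.2} // e.1.2.1 = v} =
      Nat.card {p : V × L // Edge p.1 v p.2} :=
  Nat.card_congr
    { toFun := fun ⟨⟨(a, b, c), h⟩, hb⟩ => ⟨(a, c), hb ▸ h⟩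
      invFun := fun p => ⟨⟨(p.1.1, v, p.1.2), p.2⟩, rfl⟩
      left_inv := by rintro ⟨⟨⟨a, b, c⟩, h⟩, rfl⟩; rfl
      right_inv := fun _ => rfl }

theorem natCard_edges_src_eq (v : V) :
    Nat.card {e : {x : V × V × L // Edge x.1 x.2.1 x.2.2} // e.1.1 = v} =
      Nat.card {p : V × L // Edge v p.1 p.2} :=
  Nat.card_congr
    { toFun := fun ⟨⟨(a, b, c), h⟩, ha⟩ => ⟨(b, c), ha ▸ h⟩
      invFun := fun p => ⟨⟨(v, p.1.1, p.1.2), p.2⟩, rfl⟩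
      left_inv := by rintro ⟨⟨⟨a, b, c⟩, h⟩, rfl⟩; rfl
      right_inv := fun _ => rfl }

theorem exists_eulerian_circuit_of_rel [Finite V] [Finite L]
    (balanced : ∀ v, Nat.card {p : V × L // Edge p.1 v p.2} =
      Nat.card {p : V × L // Edge v p.1 p.2})
    (connected : ∀ u v, (∃ w a, Edge w u a) → (∃ w a, Edge v w a) →
      Relation.ReflTransGen (fun x y => ∃ a, Edge x y a) u v) :
    ∃ l : List {e : V × V × L // Edge e.1 e.2.1 e.2.2}, l.Nodup ∧ (∀ e, e ∈ l) ∧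
      ∀ i : Fin l.length, (l.get i).1.2.1 = (l.get ⟨((i : ℕ) + 1) % l.length,
        Nat.mod_lt _ (Nat.lt_of_le_of_lt (Nat.zero_le _) i.2)⟩).1.1 := by
  obtain ⟨l, hnd, hall, hcyc⟩ := exists_eulerian_circuit
    (fun e : {x : V × V × L // Edge x.1 x.2.1 x.2.2} => e.1.1) (fun e => e.1.2.1)
    (fun v => by rw [natCard_edges_tgt_eq, natCard_edges_src_eq, balanced])
    fun e e' => Relation.ReflTransGen.mono (fun x y ⟨a, h⟩ => ⟨⟨(x, y, a), h⟩, rfl, rfl⟩) _ _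
      (connected _ _ ⟨_, _, e.2⟩ ⟨_, _, e'.2⟩)
  exact ⟨l, hnd, hall, List.rel_get_mod_of_cycleChain hcyc⟩

end LabelledDigraph

theorem patLex_injective {m n k : ℕ} :
    Function.Injective (patLex : (Fin m → Fin n → Fin k) → _) :=
  fun _ _ h => funext fun i => congrFun h i

section Rotation

variable {m n k : ℕ} [NeZero m]

theorem vrot_vrot (r s : Fin m) (P : Fin m → Fin n → Fin k) :
    vrot r (vrot s P) = vrot (r + s) P := by
  funext i
  simp [vrot, add_assoc]

theorem vrot_zero (P : Fin m → Fin n → Fin k) : vrot 0 P = P := by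
  funext i
  simp [vrot]

theorem vrot_neg_vrot (r : Fin m) (P : Fin m → Fin n → Fin k) : vrot (-r) (vrot r P) = P := by
  rw [vrot_vrot, neg_add_cancel, vrot_zero]

theorem vrot_injective (r : Fin m) :
    Function.Injective (vrot r : (Fin m → Fin n → Fin k) → Fin m → Fin n → Fin k) :=
  Function.LeftInverse.injective (g := vrot (-r)) (vrot_neg_vrot r)

theorem vrot_comm (r s : Fin m) (P : Fin m → Fin n → Fin k) :
    vrot r (vrot s P) = vrot s (vrot r P) := by
  rw [vrot_vrot, vrot_vrot, add_comm]

theorem vrot_neg_eq_self {r : Fin m} {P : Fin m → Fin n → Fin k} (h : vrot r P = P) :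
    vrot (-r) P = P := by
  conv_lhs => rw [← h, vrot_neg_vrot]

def IsRowAperiodic (Q : Fin m → Fin n → Fin k) : Prop :=
  ∀ r : Fin m, vrot r Q = Q → r = 0

theorem isRowAperiodic_map_iff {n' : ℕ}
    {F : (Fin m → Fin n → Fin k) → Fin m → Fin n' → Fin k} (hF : Function.Injective F)
    (hcomm : ∀ r Q, F (vrot r Q) = vrot r (F Q)) {Q : Fin m → Fin n → Fin k} :
    IsRowAperiodic (F Q) ↔ IsRowAperiodic Q := by
  simp only [IsRowAperiodic, ← hcomm, hF.eq_iff]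

theorem isRowAperiodic_vrot_iff (s : Fin m) {Q : Fin m → Fin n → Fin k} :
    IsRowAperiodic (vrot s Q) ↔ IsRowAperiodic Q :=
  isRowAperiodic_map_iff (vrot_injective s) fun r Q => vrot_comm s r Q

theorem isRowAperiodic_of_column {Q : Fin m → Fin n → Fin k} (c : Fin n)
    (hc : ∀ r : Fin m, (fun i => Q (i + r) c) = (fun i => Q i c) → r = 0) :
    IsRowAperiodic Q :=
  fun r hr => hc r (funext fun i => congrFun (congrFun hr i) c)

theorem exists_aperiodic_column (hk : 2 ≤ k) :
    ∃ a : Fin m → Fin k, ∀ r : Fin m, (fun i => a (i + r)) = a → r = 0 := by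
  refine ⟨fun i => if i = 0 then ⟨1, hk⟩ else ⟨0, by omega⟩, fun r hr => ?_⟩
  by_contra h
  simpa [h] using congrFun hr 0

end Rotation

section MinRep

variable {m n k : ℕ} [NeZero m] {α : Type*} [LinearOrder α]
  (κ : (Fin m → Fin n → Fin k) → α)

-- `IsLexmin` is definitionally `IsMinRot patLex`.
def IsMinRot (P : Fin m → Fin n → Fin k) : Prop :=
  ∀ r, κ P ≤ κ (vrot r P)

noncomputable def minRep (P : Fin m → Fin n → Fin k) : Fin m → Fin n → Fin k :=
  vrot (Finite.exists_min fun r => κ (vrot r P)).choose P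

theorem exists_vrot_eq_minRep (P : Fin m → Fin n → Fin k) : ∃ r, vrot r P = minRep κ P :=
  ⟨_, rfl⟩

theorem isMinRot_minRep (P : Fin m → Fin n → Fin k) : IsMinRot κ (minRep κ P) := by
  intro r
  rw [minRep, vrot_vrot]
  exact (Finite.exists_min fun r => κ (vrot r P)).choose_spec _

variable {κ}

theorem IsMinRot.eq_of_vrot_eq (hκ : Function.Injective κ) {P Q : Fin m → Fin n → Fin k}
    (hP : IsMinRot κ P) (hQ : IsMinRot κ Q) {r : Fin m} (h : vrot r P = Q) : P = Q :=
  hκ <| le_antisymm (h ▸ hP r) (by simpa only [← h, vrot_neg_vrot] using hQ (-r))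

theorem minRep_eq_iff (hκ : Function.Injective κ) {P Q : Fin m → Fin n → Fin k} :
    minRep κ P = Q ↔ IsMinRot κ Q ∧ ∃ r, vrot r P = Q := by
  refine ⟨fun h => h ▸ ⟨isMinRot_minRep κ P, exists_vrot_eq_minRep κ P⟩, ?_⟩
  rintro ⟨hQ, r, rfl⟩
  obtain ⟨s, hs⟩ := exists_vrot_eq_minRep κ P
  refine (isMinRot_minRep κ P).eq_of_vrot_eq hκ hQ (r := r - s) ?_
  rw [← hs, vrot_vrot, sub_add_cancel]

theorem minRep_eq_self (hκ : Function.Injective κ) {P : Fin m → Fin n → Fin k}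
    (hP : IsMinRot κ P) : minRep κ P = P :=
  (minRep_eq_iff hκ).2 ⟨hP, 0, vrot_zero P⟩

theorem minRep_vrot (hκ : Function.Injective κ) (s : Fin m) (P : Fin m → Fin n → Fin k) :
    minRep κ (vrot s P) = minRep κ P := by
  obtain ⟨t, ht⟩ := exists_vrot_eq_minRep κ P
  exact (minRep_eq_iff hκ).2 ⟨isMinRot_minRep κ P, t - s, by rw [vrot_vrot, sub_add_cancel, ht]⟩

noncomputable def minRepEquiv (hκ : Function.Injective κ)
    (F : (Fin m → Fin n → Fin k) ≃ (Fin m → Fin n → Fin k))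
    (hF : ∀ r P, F (vrot r P) = vrot r (F P)) {p q : (Fin m → Fin n → Fin k) → Prop}
    (hp : ∀ r P, p (vrot r P) ↔ p P) (hq : ∀ r P, q (vrot r P) ↔ q P)
    (hpq : ∀ P, q (F P) ↔ p P) :
    {P // IsMinRot κ P ∧ p P} ≃ {P // IsMinRot κ P ∧ q P} :=
  have hF' : ∀ r P, F.symm (vrot r P) = vrot r (F.symm P) := fun r P =>
    F.symm_apply_eq.2 (by rw [hF, F.apply_symm_apply])
  { toFun := fun P => ⟨minRep κ (F P), isMinRot_minRep κ _, by
      obtain ⟨r, hr⟩ := exists_vrot_eq_minRep κ (F P)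
      rw [← hr, hq, hpq]
      exact P.2.2⟩
    invFun := fun P => ⟨minRep κ (F.symm P), isMinRot_minRep κ _, by
      obtain ⟨r, hr⟩ := exists_vrot_eq_minRep κ (F.symm P)
      rw [← hr, hp, ← hpq, F.apply_symm_apply]
      exact P.2.2⟩
    left_inv := fun P => by
      obtain ⟨r, hr⟩ := exists_vrot_eq_minRep κ (F P)
      ext1
      simp only [← hr, hF', Equiv.symm_apply_apply, minRep_vrot hκ, minRep_eq_self hκ P.2.1]
    right_inv := fun P => by
      obtain ⟨r, hr⟩ := exists_vrot_eq_minRep κ (F.symm P)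
      ext1
      simp only [← hr, hF, Equiv.apply_symm_apply, minRep_vrot hκ, minRep_eq_self hκ P.2.1] }

end MinRep

theorem exists_isRowLyndon_vrot_iff {m n k : ℕ} [NeZero m] {Q : Fin m → Fin n → Fin k} :
    (∃ r, IsRowLyndon (vrot r Q)) ↔ IsRowAperiodic Q := by
  constructor
  · rintro ⟨r, hL⟩ s hs
    by_contra h0
    have := hL s (Fin.val_ne_zero_iff.2 h0)
    rw [vrot_comm, hs] at this
    exact lt_irrefl _ this
  · intro hA
    obtain ⟨r, hr⟩ := exists_vrot_eq_minRep patLex Q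
    have hA' := (isRowAperiodic_vrot_iff r).2 hA
    rw [hr] at hA'
    refine ⟨r, fun s hs => ?_⟩
    rw [hr]
    refine lt_of_le_of_ne (isMinRot_minRep patLex Q s) fun h => hs ?_
    rw [hA' s (patLex_injective h).symm, Fin.val_zero]

section Extension

variable {m n k : ℕ}

def headPat (Q : Fin m → Fin (n + 1) → Fin k) : Fin m → Fin n → Fin k :=
  fun i c => Q i c.castSucc

def lastCol (Q : Fin m → Fin (n + 1) → Fin k) : Fin m → Fin k :=
  fun i => Q i (Fin.last n)

@[simp]
theorem headPat_snocPat (P : Fin m → Fin n → Fin k) (R : Fin m → Fin k) :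
    headPat (snocPat P R) = P := by
  funext i c
  simp [headPat, snocPat]

@[simp]
theorem lastCol_snocPat (P : Fin m → Fin n → Fin k) (R : Fin m → Fin k) :
    lastCol (snocPat P R) = R := by
  funext i
  simp [lastCol, snocPat]

@[simp]
theorem snocPat_headPat_lastCol (Q : Fin m → Fin (n + 1) → Fin k) :
    snocPat (headPat Q) (lastCol Q) = Q := by
  funext i
  exact Fin.snoc_init_self (Q i)

theorem snocPat_inj {P P' : Fin m → Fin n → Fin k} {R R' : Fin m → Fin k} :
    snocPat P R = snocPat P' R' ↔ P = P' ∧ R = R' :=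
  ⟨fun h => ⟨by simpa using congrArg headPat h, by simpa using congrArg lastCol h⟩,
    fun h => h.1 ▸ h.2 ▸ rfl⟩

theorem vrot_snocPat (r : Fin m) (P : Fin m → Fin n → Fin k) (R : Fin m → Fin k) :
    vrot r (snocPat P R) = snocPat (vrot r P) (fun i => R (i + r)) := rfl

theorem headPat_vrot (r : Fin m) (Q : Fin m → Fin (n + 1) → Fin k) :
    headPat (vrot r Q) = vrot r (headPat Q) := rfl

theorem tailPat_vrot (r : Fin m) (Q : Fin m → Fin (n + 1) → Fin k) :
    tailPat (vrot r Q) = vrot r (tailPat Q) := rfl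

def colRotate : (Fin m → Fin (n + 1) → Fin k) ≃ (Fin m → Fin (n + 1) → Fin k) where
  toFun Q i c := Q i (finRotate _ c)
  invFun Q i c := Q i ((finRotate _).symm c)
  left_inv Q := by simp
  right_inv Q := by simp

theorem headPat_colRotate (Q : Fin m → Fin (n + 1) → Fin k) :
    headPat (colRotate Q) = tailPat Q := by
  funext i c
  simp [headPat, colRotate, tailPat]

/-- Ordering `(m, n+1)`-patterns by their first `n` columns and then by their last column
makes the minimal rotation of `[P, R]` exactly the one whose label `R` is admissible in
`RingEdge`. -/
def edgeKey (Q : Fin m → Fin (n + 1) → Fin k) :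
    Lex (Fin m → Lex (Fin n → Fin k)) ×ₗ Lex (Fin m → Fin k) :=
  toLex (patLex (headPat Q), toLex (lastCol Q))

theorem edgeKey_injective : Function.Injective (edgeKey : (Fin m → Fin (n + 1) → Fin k) → _) := by
  intro Q Q' h
  obtain ⟨hh, hl⟩ := Prod.ext_iff.1 (toLex.injective h)
  rw [← snocPat_headPat_lastCol Q, ← snocPat_headPat_lastCol Q', patLex_injective hh,
    toLex.injective hl]

end Extension

section Edges

variable {m n k : ℕ} [NeZero m]

theorem isMinRot_edgeKey_snocPat_iff {P : Fin m → Fin n → Fin k} {R : Fin m → Fin k} :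
    IsMinRot edgeKey (snocPat P R) ↔ IsLexmin P ∧
      ∀ R', (∃ r, vrot r (snocPat P R') = snocPat P R) → toLex R ≤ toLex R' := by
  simp only [IsMinRot, edgeKey, vrot_snocPat, headPat_snocPat, lastCol_snocPat,
    Prod.Lex.toLex_le_toLex, snocPat_inj]
  constructor
  · intro h
    refine ⟨fun r => (h r).elim le_of_lt fun h => h.1.le, ?_⟩
    rintro R' ⟨r, hP, rfl⟩
    have := h (-r)
    simp only [vrot_neg_eq_self hP, lt_irrefl, false_or, true_and, neg_add_cancel_right] at this
    exact this
  · rintro ⟨hlex, hR⟩ r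
    by_cases hP : vrot r P = P
    · refine Or.inr ⟨by rw [hP], hR _ ⟨-r, vrot_neg_eq_self hP, ?_⟩⟩
      simp
    · exact Or.inl (lt_of_le_of_ne (hlex r) fun h => hP (patLex_injective h).symm)

theorem isLexmin_headPat {Q : Fin m → Fin (n + 1) → Fin k} (hQ : IsMinRot edgeKey Q) :
    IsLexmin (headPat Q) := by
  rw [← snocPat_headPat_lastCol Q] at hQ
  simpa using (isMinRot_edgeKey_snocPat_iff.1 hQ).1

theorem ringEdge_iff {P₁ P₂ : Fin m → Fin n → Fin k} {R : Fin m → Fin k} :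
    RingEdge P₁ P₂ R ↔ IsMinRot edgeKey (snocPat P₁ R) ∧ IsRowAperiodic (snocPat P₁ R) ∧
      minRep patLex (tailPat (snocPat P₁ R)) = P₂ := by
  rw [isMinRot_edgeKey_snocPat_iff, ← exists_isRowLyndon_vrot_iff,
    minRep_eq_iff patLex_injective, RingEdge]
  exact ⟨fun ⟨h₁, h₂, h₃, h₄, h₅⟩ => ⟨⟨h₁, h₅⟩, h₃, h₂, h₄⟩,
    fun ⟨⟨h₁, h₅⟩, h₃, h₂, h₄⟩ => ⟨h₁, h₂, h₃, h₄, h₅⟩⟩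

end Edges

section Balance

variable {m n k : ℕ} [NeZero m]

def snocEquiv : (Fin m → Fin n → Fin k) × (Fin m → Fin k) ≃ (Fin m → Fin (n + 1) → Fin k) where
  toFun e := snocPat e.1 e.2
  invFun Q := (headPat Q, lastCol Q)
  left_inv e := by simp
  right_inv := snocPat_headPat_lastCol

def inEdgesEquiv (V : Fin m → Fin n → Fin k) :
    {e : (Fin m → Fin n → Fin k) × (Fin m → Fin k) // RingEdge e.1 V e.2} ≃
      {Q // IsMinRot edgeKey Q ∧ IsRowAperiodic Q ∧ minRep patLex (tailPat Q) = V} :=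
  snocEquiv.subtypeEquiv fun _ => ringEdge_iff

theorem snocPat_lastCol_eq {V : Fin m → Fin n → Fin k} {Q : Fin m → Fin (n + 1) → Fin k}
    (hQ : IsMinRot edgeKey Q) (hV : minRep patLex (headPat Q) = V) :
    snocPat V (lastCol Q) = Q := by
  rw [← hV, minRep_eq_self patLex_injective (isLexmin_headPat hQ), snocPat_headPat_lastCol]

noncomputable def outEdgesEquiv (V : Fin m → Fin n → Fin k) :
    {e : (Fin m → Fin n → Fin k) × (Fin m → Fin k) // RingEdge V e.1 e.2} ≃
      {Q // IsMinRot edgeKey Q ∧ IsRowAperiodic Q ∧ minRep patLex (headPat Q) = V} where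
  toFun e := ⟨snocPat V e.1.2, by
    obtain ⟨hmin, haper, -⟩ := ringEdge_iff.1 e.2
    exact ⟨hmin, haper, by rw [headPat_snocPat, minRep_eq_self patLex_injective e.2.1]⟩⟩
  invFun Q := ⟨(minRep patLex (tailPat Q.1), lastCol Q.1), by
    obtain ⟨hmin, haper, hV⟩ := Q.2
    rw [ringEdge_iff, snocPat_lastCol_eq hmin hV]
    exact ⟨hmin, haper, rfl⟩⟩
  left_inv e := by
    ext1
    simp only [lastCol_snocPat, (ringEdge_iff.1 e.2).2.2]
  right_inv Q := Subtype.ext (snocPat_lastCol_eq Q.2.1 Q.2.2.2)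

noncomputable def inEdgesEquivOutEdges (V : Fin m → Fin n → Fin k) :
    {e : (Fin m → Fin n → Fin k) × (Fin m → Fin k) // RingEdge e.1 V e.2} ≃
      {e : (Fin m → Fin n → Fin k) × (Fin m → Fin k) // RingEdge V e.1 e.2} :=
  (inEdgesEquiv V).trans <| (minRepEquiv edgeKey_injective colRotate (fun _ _ => rfl)
    (fun r Q => by rw [isRowAperiodic_vrot_iff, tailPat_vrot, minRep_vrot patLex_injective])
    (fun r Q => by rw [isRowAperiodic_vrot_iff, headPat_vrot, minRep_vrot patLex_injective])
    (fun Q => by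
      rw [isRowAperiodic_map_iff colRotate.injective (fun _ _ => rfl), headPat_colRotate])).trans
    (outEdgesEquiv V).symm

end Balance

section Window

variable {m n k : ℕ}

def window (w : ℕ → Fin m → Fin k) (n t : ℕ) : Fin m → Fin n → Fin k :=
  fun i c => w (t + c) i

theorem headPat_window (w : ℕ → Fin m → Fin k) (t : ℕ) :
    headPat (window w (n + 1) t) = window w n t := rfl

theorem tailPat_window (w : ℕ → Fin m → Fin k) (t : ℕ) :
    tailPat (window w (n + 1) t) = window w n (t + 1) := by
  funext i c
  simp only [tailPat, window, Fin.val_succ, Nat.add_right_comm, Nat.add_assoc]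

end Window

section Connectivity

variable {m n k : ℕ} [NeZero m]

theorem exists_ringEdge_of_isRowAperiodic {Q : Fin m → Fin (n + 1) → Fin k}
    (hQ : IsRowAperiodic Q) :
    ∃ R, RingEdge (minRep patLex (headPat Q)) (minRep patLex (tailPat Q)) R := by
  obtain ⟨r, hr⟩ := exists_vrot_eq_minRep edgeKey Q
  have hmin := isMinRot_minRep edgeKey Q
  rw [← hr] at hmin
  refine ⟨lastCol (vrot r Q), ringEdge_iff.2 ?_⟩
  rw [← minRep_vrot patLex_injective r, ← headPat_vrot,
    minRep_eq_self patLex_injective (isLexmin_headPat hmin), snocPat_headPat_lastCol,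
    isRowAperiodic_vrot_iff, tailPat_vrot, minRep_vrot patLex_injective]
  exact ⟨hmin, hQ, rfl⟩

theorem exists_ringEdge (hk : 2 ≤ k) : ∃ (P₁ P₂ : Fin m → Fin n → Fin k) (R : Fin m → Fin k),
    RingEdge P₁ P₂ R := by
  obtain ⟨a, ha⟩ := exists_aperiodic_column (m := m) hk
  obtain ⟨R, hR⟩ := exists_ringEdge_of_isRowAperiodic
    (isRowAperiodic_of_column (Q := fun i (_ : Fin (n + 1)) => a i) 0 ha)
  exact ⟨_, _, R, hR⟩

theorem reflTransGen_window {w : ℕ → Fin m → Fin k} {N : ℕ}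
    (hw : ∀ t < N, IsRowAperiodic (window w (n + 1) t)) :
    Relation.ReflTransGen (fun P₁ P₂ => ∃ R, RingEdge P₁ P₂ R)
      (minRep patLex (window w n 0)) (minRep patLex (window w n N)) := by
  induction N with
  | zero => exact .refl
  | succ N ih =>
    refine (ih fun t ht => hw t (by omega)).tail ?_
    simpa only [headPat_window, tailPat_window] using
      exists_ringEdge_of_isRowAperiodic (hw N (by omega))

theorem reflTransGen_ringEdge (hk : 2 ≤ k) {V W : Fin m → Fin n → Fin k} (hV : IsLexmin V)
    (hW : IsLexmin W) : Relation.ReflTransGen (fun P₁ P₂ => ∃ R, RingEdge P₁ P₂ R) V W := by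
  obtain ⟨a, ha⟩ := exists_aperiodic_column (m := m) hk
  -- slide from `V` to `W` across an aperiodic column `a`, which keeps every window aperiodic
  let w : ℕ → Fin m → Fin k := fun c =>
    if h : c < n then fun i => V i ⟨c, h⟩
    else if h' : n < c ∧ c - (n + 1) < n then fun i => W i ⟨c - (n + 1), h'.2⟩ else a
  have hstart : window w n 0 = V := by
    funext i c
    simp [window, w, c.2]
  have hend : window w n (n + 1) = W := by
    funext i c
    simp [window, w, show ¬ n + 1 + (c : ℕ) < n by omega, show n < n + 1 + (c : ℕ) by omega]
  have haper : ∀ t < n + 1, IsRowAperiodic (window w (n + 1) t) := by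
    intro t ht
    have hcol : ∀ i, window w (n + 1) t i ⟨n - t, by omega⟩ = a i := by
      intro i
      simp [window, w, show t + (n - t) = n by omega]
    refine isRowAperiodic_of_column ⟨n - t, by omega⟩ fun r hr => ha r ?_
    simpa only [hcol] using hr
  simpa only [hstart, hend, minRep_eq_self patLex_injective hV,
    minRep_eq_self patLex_injective hW] using reflTransGen_window haper

end Connectivity

theorem ringGraph_eulerian_general (m j k : ℕ) (hm : 2 ≤ m) (hk : 2 ≤ k) :
    (∀ V : Fin m → Fin j → Fin k, IsLexmin V →
      Nat.card {e : (Fin m → Fin j → Fin k) × (Fin m → Fin k) // RingEdge e.1 V e.2}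
        = Nat.card {e : (Fin m → Fin j → Fin k) × (Fin m → Fin k) // RingEdge V e.1 e.2}) ∧
    ∃ l : List {e : (Fin m → Fin j → Fin k) × (Fin m → Fin j → Fin k) × (Fin m → Fin k) //
        RingEdge e.1 e.2.1 e.2.2},
      l ≠ [] ∧ l.Nodup ∧ (∀ e, e ∈ l) ∧
      ∀ i : Fin l.length,
        (l.get i).1.2.1
          = (l.get ⟨((i : ℕ) + 1) % l.length,
              Nat.mod_lt _ (Nat.lt_of_le_of_lt (Nat.zero_le _) i.2)⟩).1.1 := by
  have : NeZero m := ⟨by omega⟩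
  have balanced V := Nat.card_congr (inEdgesEquivOutEdges (m := m) (n := j) (k := k) V)
  obtain ⟨l, hnd, hall, hcirc⟩ := exists_eulerian_circuit_of_rel RingEdge balanced
    fun _ _ ⟨_, _, hu⟩ ⟨_, _, hv⟩ => reflTransGen_ringEdge hk hu.2.1 hv.1
  obtain ⟨P₁, P₂, R, hR⟩ := exists_ringEdge (m := m) (n := j) hk
  exact ⟨fun V _ => balanced V, ⟨l, List.ne_nil_of_mem (hall ⟨(P₁, P₂, R), hR⟩), hnd, hall, hcirc⟩⟩

/-- In every `(m, j+1)_k`-ring graph, the in-degree of each vertex equals its out-degree;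
combined with weak connectivity, the graph is Eulerian, i.e. it has a closed directed walk
using every edge exactly once. -/
theorem ringGraph_eulerian (m j k : ℕ) (hm : 2 ≤ m) (hj : 1 ≤ j) (hk : 2 ≤ k) :
    (∀ V : Fin m → Fin j → Fin k, IsLexmin V →
      Nat.card {e : (Fin m → Fin j → Fin k) × (Fin m → Fin k) // RingEdge e.1 V e.2}
        = Nat.card {e : (Fin m → Fin j → Fin k) × (Fin m → Fin k) // RingEdge V e.1 e.2}) ∧
    ∃ l : List {e : (Fin m → Fin j → Fin k) × (Fin m → Fin j → Fin k) × (Fin m → Fin k) //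
        RingEdge e.1 e.2.1 e.2.2},
      l ≠ [] ∧ l.Nodup ∧ (∀ e, e ∈ l) ∧
      ∀ i : Fin l.length,
        (l.get i).1.2.1
          = (l.get ⟨((i : ℕ) + 1) % l.length,
              Nat.mod_lt _ (Nat.lt_of_le_of_lt (Nat.zero_le _) i.2)⟩).1.1 :=
  ringGraph_eulerian_general m j k hm hk
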